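/- arXiv:math/0402221 — 7 statements merged into one kernel-verified Lean document; each statement's English description precedes it below -/
import Mathlib

section
/- Let W be a finite-dimensional real vector space with dim W ≥ 1, let V := W ⊕ W* carry the symplectic form ω((w,φ),(w',φ')) := φ(w') − φ'(w), and let 𝔥 ⊆ End(V) be the image of the injective Lie algebra homomorphism gl(W) → End(V) sending h to the endomorphism (w,φ) ↦ (hw, −φ∘h); then 𝔥 is a Lie subalgebra of sp(V, ω). Let K(𝔥) be the space of alternating bilinear maps R : V × V → 𝔥 satisfying the first Bianchi identity R(x,y)z + R(y,z)x + R(z,x)y = 0 for all x,y,z ∈ V. Then every R ∈ K(𝔥) satisfies: R(x,y) = 0 for all x,y ∈ W; R(φ,ψ) = 0 for all φ,ψ ∈ W*; and R(φ,x)y = R(φ,y)x for all x,y ∈ W, φ ∈ W*. Moreover the assignment R ↦ σ_R, where σ_R(x,y,φ,ψ) := ψ(R(φ,x)y) for x,y ∈ W and φ,ψ ∈ W*, is a linear isomorphism from K(𝔥) onto the space of multilinear maps W × W × W* × W* → ℝ that are symmetric in the first two arguments and symmetric in the last two arguments. -/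
section

variable (W : Type) [AddCommGroup W] [Module ℝ W]

/-- The symplectic form `ω((w,φ),(w',φ')) = φ(w') − φ'(w)` on `W ⊕ W*`. -/
def omegaW (p q : W × Module.Dual ℝ W) : ℝ := p.2 q.1 - q.2 p.1

/-- The embedding `gl(W) → End(W ⊕ W*)`, `h ↦ ((w,φ) ↦ (hw, −φ∘h))`. -/
def embW (h : Module.End ℝ W) : Module.End ℝ (W × Module.Dual ℝ W) :=
  LinearMap.prodMap h (-(h.dualMap))

/-- Membership in the curvature space `K(𝔥)` for `𝔥` the image of `gl(W)`:
alternating bilinear maps with values in `𝔥` satisfying the first Bianchi identity. -/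
def inKW (R : (W × Module.Dual ℝ W) →ₗ[ℝ] (W × Module.Dual ℝ W) →ₗ[ℝ]
    Module.End ℝ (W × Module.Dual ℝ W)) : Prop :=
  (∀ p : W × Module.Dual ℝ W, R p p = 0) ∧
  (∀ p q : W × Module.Dual ℝ W, ∃ h : Module.End ℝ W, R p q = embW W h) ∧
  (∀ p q r : W × Module.Dual ℝ W, R p q r + R q r p + R r p q = 0)

/-- The tensor `σ_R(x, y, φ, ψ) = ψ(R(φ,x)y)`. -/
def sigmaW (R : (W × Module.Dual ℝ W) →ₗ[ℝ] (W × Module.Dual ℝ W) →ₗ[ℝ]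
    Module.End ℝ (W × Module.Dual ℝ W)) (x y : W) (φ ψ : Module.Dual ℝ W) : ℝ :=
  ψ ((R ((0 : W), φ) (x, (0 : Module.Dual ℝ W)) (y, (0 : Module.Dual ℝ W))).1)

/-- Multilinear maps `W × W × W* × W* → ℝ` symmetric in the first two and in the last two
arguments. -/
def isBiSymW (τ : W → W → Module.Dual ℝ W → Module.Dual ℝ W → ℝ) : Prop :=
  (∀ (c : ℝ) (x x' y : W) (φ ψ : Module.Dual ℝ W),
    τ (c • x + x') y φ ψ = c * τ x y φ ψ + τ x' y φ ψ) ∧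
  (∀ (c : ℝ) (x y y' : W) (φ ψ : Module.Dual ℝ W),
    τ x (c • y + y') φ ψ = c * τ x y φ ψ + τ x y' φ ψ) ∧
  (∀ (c : ℝ) (x y : W) (φ φ' ψ : Module.Dual ℝ W),
    τ x y (c • φ + φ') ψ = c * τ x y φ ψ + τ x y φ' ψ) ∧
  (∀ (c : ℝ) (x y : W) (φ ψ ψ' : Module.Dual ℝ W),
    τ x y φ (c • ψ + ψ') = c * τ x y φ ψ + τ x y φ ψ') ∧
  (∀ (x y : W) (φ ψ : Module.Dual ℝ W), τ x y φ ψ = τ y x φ ψ) ∧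
  (∀ (x y : W) (φ ψ : Module.Dual ℝ W), τ x y φ ψ = τ x y ψ φ)

end

namespace CurvAux
variable {W : Type} [AddCommGroup W] [Module ℝ W]

lemma embW_fst (h : Module.End ℝ W) (p : W × Module.Dual ℝ W) : (embW W h p).1 = h p.1 := rfl
lemma embW_snd (h : Module.End ℝ W) (p : W × Module.Dual ℝ W) (z : W) :
    (embW W h p).2 z = -(p.2 (h z)) := rfl
lemma embW_add (h k : Module.End ℝ W) : embW W (h + k) = embW W h + embW W k := by
  refine LinearMap.ext fun p => Prod.ext rfl (LinearMap.ext fun z => ?_)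
  show -(p.2 ((h + k) z)) = -(p.2 (h z)) + -(p.2 (k z))
  simp [add_comm]
lemma embW_smul (c : ℝ) (h : Module.End ℝ W) : embW W (c • h) = c • embW W h := by
  refine LinearMap.ext fun p => Prod.ext rfl (LinearMap.ext fun z => ?_)
  show -(p.2 ((c • h) z)) = c • -(p.2 (h z))
  simp
lemma embW_zero : embW W (0 : Module.End ℝ W) = 0 := by
  refine LinearMap.ext fun p => Prod.ext rfl (LinearMap.ext fun z => ?_)
  show -(p.2 ((0 : Module.End ℝ W) z)) = 0
  simp
lemma embW_sub (h k : Module.End ℝ W) : embW W (h - k) = embW W h - embW W k := by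
  refine LinearMap.ext fun p => Prod.ext rfl (LinearMap.ext fun z => ?_)
  show -(p.2 ((h - k) z)) = -(p.2 (h z)) - -(p.2 (k z))
  simp [map_sub, neg_sub, sub_eq_add_neg, add_comm]

lemma embW_inj : Function.Injective (embW W) := by
  intro h k hhk
  ext z
  exact congrArg (fun f => (f (z, 0)).1) hhk

lemma embW_bracket (h k : Module.End ℝ W) : embW W ⁅h, k⁆ = ⁅embW W h, embW W k⁆ := by
  refine LinearMap.ext fun p => Prod.ext ?_ (LinearMap.ext fun z => ?_)
  · simp [embW, Ring.lie_def, LinearMap.sub_apply, Module.End.mul_apply]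
  · show -(p.2 (⁅h, k⁆ z)) = (⁅embW W h, embW W k⁆ p).2 z
    simp [embW, Ring.lie_def, LinearMap.sub_apply, Module.End.mul_apply]

lemma embW_omega (h : Module.End ℝ W) (p q : W × Module.Dual ℝ W) :
    omegaW W (embW W h p) q + omegaW W p (embW W h q) = 0 := by
  simp [omegaW, embW]

section tau
variable {τ : W → W → Module.Dual ℝ W → Module.Dual ℝ W → ℝ}
lemma tau_zero1 (hτ : isBiSymW W τ) (y : W) (φ ψ : Module.Dual ℝ W) : τ (0 : W) y φ ψ = 0 := by
  have := hτ.1 1 0 0 y φ ψ; simpa using this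
lemma tau_zero2 (hτ : isBiSymW W τ) (x : W) (φ ψ : Module.Dual ℝ W) : τ x (0 : W) φ ψ = 0 := by
  have := hτ.2.1 1 x 0 0 φ ψ; simpa using this
lemma tau_zero3 (hτ : isBiSymW W τ) (x y : W) (ψ : Module.Dual ℝ W) : τ x y 0 ψ = 0 := by
  have := hτ.2.2.1 1 x y 0 0 ψ; simpa using this
lemma tau_zero4 (hτ : isBiSymW W τ) (x y : W) (φ : Module.Dual ℝ W) : τ x y φ 0 = 0 := by
  have := hτ.2.2.2.1 1 x y φ 0 0; simpa using this
end tau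

variable [FiniteDimensional ℝ W]

noncomputable def Fd (τ : W → W → Module.Dual ℝ W → Module.Dual ℝ W → ℝ) (hτ : isBiSymW W τ)
    (x y : W) (φ : Module.Dual ℝ W) : Module.Dual ℝ (Module.Dual ℝ W) where
  toFun ψ := τ x y φ ψ
  map_add' ψ ψ' := by have := hτ.2.2.2.1 1 x y φ ψ ψ'; simpa using this
  map_smul' c ψ := by
    have := hτ.2.2.2.1 c x y φ ψ 0; simpa [tau_zero4 hτ] using this

lemma Fd_apply (τ : W → W → Module.Dual ℝ W → Module.Dual ℝ W → ℝ) (hτ : isBiSymW W τ)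
    (x y : W) (φ ψ : Module.Dual ℝ W) : Fd τ hτ x y φ ψ = τ x y φ ψ := rfl

noncomputable def hmapd (τ : W → W → Module.Dual ℝ W → Module.Dual ℝ W → ℝ) (hτ : isBiSymW W τ)
    (φ : Module.Dual ℝ W) (x : W) : Module.End ℝ W where
  toFun y := (Module.evalEquiv ℝ W).symm (Fd τ hτ x y φ)
  map_add' y y' := by
    have h : Fd τ hτ x (y + y') φ = Fd τ hτ x y φ + Fd τ hτ x y' φ := by
      ext ψ; have := hτ.2.1 1 x y y' φ ψ; simpa [Fd_apply] using this
    rw [h, map_add]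
  map_smul' c y := by
    have h : Fd τ hτ x (c • y) φ = c • Fd τ hτ x y φ := by
      ext ψ; have := hτ.2.1 c x y 0 φ ψ
      simpa [Fd_apply, tau_zero2 hτ] using this
    rw [h, map_smul]; rfl

lemma pair (τ : W → W → Module.Dual ℝ W → Module.Dual ℝ W → ℝ) (hτ : isBiSymW W τ)
    (φ ψ : Module.Dual ℝ W) (x y : W) : ψ (hmapd τ hτ φ x y) = τ x y φ ψ := by
  show ψ ((Module.evalEquiv ℝ W).symm (Fd τ hτ x y φ)) = τ x y φ ψ
  rw [Module.apply_evalEquiv_symm_apply]; rfl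

variable {τ : W → W → Module.Dual ℝ W → Module.Dual ℝ W → ℝ} (hτ : isBiSymW W τ)

lemma hmapd_add_left (φ φ' : Module.Dual ℝ W) (x : W) :
    hmapd τ hτ (φ + φ') x = hmapd τ hτ φ x + hmapd τ hτ φ' x := by
  ext y
  rw [← sub_eq_zero, ← Module.forall_dual_apply_eq_zero_iff ℝ]
  intro ψ
  have h1 := hτ.2.2.1 1 x y φ φ' ψ
  simp only [LinearMap.add_apply, map_sub, map_add, pair]
  simp only [one_smul] at h1
  linarith

lemma hmapd_smul_left (c : ℝ) (φ : Module.Dual ℝ W) (x : W) :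
    hmapd τ hτ (c • φ) x = c • hmapd τ hτ φ x := by
  ext y
  rw [← sub_eq_zero, ← Module.forall_dual_apply_eq_zero_iff ℝ]
  intro ψ
  have h1 := hτ.2.2.1 c x y φ 0 ψ
  simp only [LinearMap.smul_apply, map_sub, map_smul, pair, smul_eq_mul]
  simp only [add_zero, tau_zero3 hτ] at h1
  linarith

lemma hmapd_add_right (φ : Module.Dual ℝ W) (x x' : W) :
    hmapd τ hτ φ (x + x') = hmapd τ hτ φ x + hmapd τ hτ φ x' := by
  ext y
  rw [← sub_eq_zero, ← Module.forall_dual_apply_eq_zero_iff ℝ]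
  intro ψ
  have h1 := hτ.1 1 x x' y φ ψ
  simp only [LinearMap.add_apply, map_sub, map_add, pair]
  simp only [one_smul] at h1
  linarith

lemma hmapd_smul_right (c : ℝ) (φ : Module.Dual ℝ W) (x : W) :
    hmapd τ hτ φ (c • x) = c • hmapd τ hτ φ x := by
  ext y
  rw [← sub_eq_zero, ← Module.forall_dual_apply_eq_zero_iff ℝ]
  intro ψ
  have h1 := hτ.1 c x 0 y φ ψ
  simp only [LinearMap.smul_apply, map_sub, map_smul, pair, smul_eq_mul]
  simp only [add_zero, tau_zero1 hτ] at h1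
  linarith

noncomputable def Rcon (τ : W → W → Module.Dual ℝ W → Module.Dual ℝ W → ℝ) (hτ : isBiSymW W τ) :
    (W × Module.Dual ℝ W) →ₗ[ℝ] (W × Module.Dual ℝ W) →ₗ[ℝ]
      Module.End ℝ (W × Module.Dual ℝ W) :=
  LinearMap.mk₂ ℝ (fun p q => embW W (hmapd τ hτ p.2 q.1 - hmapd τ hτ q.2 p.1))
    (fun p p' q => by
      simp only [Prod.fst_add, Prod.snd_add, hmapd_add_left hτ, hmapd_add_right hτ, ← embW_add]
      congr 1; abel)
    (fun c p q => by
      simp only [Prod.smul_fst, Prod.smul_snd, hmapd_smul_left hτ, hmapd_smul_right hτ,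
        ← embW_smul]
      congr 1; rw [smul_sub])
    (fun p q q' => by
      simp only [Prod.fst_add, Prod.snd_add, hmapd_add_left hτ, hmapd_add_right hτ, ← embW_add]
      congr 1; abel)
    (fun c p q => by
      simp only [Prod.smul_fst, Prod.smul_snd, hmapd_smul_left hτ, hmapd_smul_right hτ,
        ← embW_smul]
      congr 1; rw [smul_sub])

lemma Rcon_apply (p q : W × Module.Dual ℝ W) :
    Rcon τ hτ p q = embW W (hmapd τ hτ p.2 q.1 - hmapd τ hτ q.2 p.1) := rfl

lemma Rcon_inKW : inKW W (Rcon τ hτ) := by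
  refine ⟨fun p => ?_, fun p q => ⟨_, Rcon_apply hτ p q⟩, fun p q r => ?_⟩
  · rw [Rcon_apply, sub_self, embW_zero]
  · simp only [Rcon_apply]
    refine Prod.ext ?_ ?_
    · show ((embW W _) r + (embW W _) p + (embW W _) q).1 = 0
      simp only [Prod.fst_add, embW_fst, LinearMap.sub_apply]
      rw [← Module.forall_dual_apply_eq_zero_iff ℝ]
      intro ψ
      simp only [map_add, map_sub, pair]
      have s1 := hτ.2.2.2.2.1 q.1 r.1 p.2 ψ
      have s2 := hτ.2.2.2.2.1 r.1 p.1 q.2 ψ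
      have s3 := hτ.2.2.2.2.1 p.1 q.1 r.2 ψ
      linarith
    · show ((embW W _) r + (embW W _) p + (embW W _) q).2 = 0
      refine LinearMap.ext fun z => ?_
      simp only [Prod.snd_add, LinearMap.add_apply, embW_snd, LinearMap.sub_apply,
        map_sub, pair, LinearMap.zero_apply]
      have s1 := hτ.2.2.2.2.2 q.1 z p.2 r.2
      have s2 := hτ.2.2.2.2.2 r.1 z q.2 p.2
      have s3 := hτ.2.2.2.2.2 p.1 z r.2 q.2
      linarith

lemma Rcon_sigma (x y : W) (φ ψ : Module.Dual ℝ W) :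
    sigmaW W (Rcon τ hτ) x y φ ψ = τ x y φ ψ := by
  unfold sigmaW
  rw [Rcon_apply]
  simp only [embW_fst, LinearMap.sub_apply, map_sub, pair]
  simp [tau_zero3 hτ]

section structural
variable {R : (W × Module.Dual ℝ W) →ₗ[ℝ] (W × Module.Dual ℝ W) →ₗ[ℝ]
    Module.End ℝ (W × Module.Dual ℝ W)}

omit [FiniteDimensional ℝ W] in
lemma antisym (halt : ∀ p : W × Module.Dual ℝ W, R p p = 0) (p q : W × Module.Dual ℝ W) :
    R p q = - R q p := by
  have h1 : R p q + R q p = 0 := by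
    have h0 := halt (p + q)
    simp only [map_add, LinearMap.add_apply, halt p, halt q, zero_add, add_zero] at h0
    exact add_comm (R q p) (R p q) ▸ h0
  exact eq_neg_of_add_eq_zero_left (a := R p q) (b := R q p) h1

lemma structA (hK : inKW W R) (x y : W) :
    R (x, (0 : Module.Dual ℝ W)) (y, (0 : Module.Dual ℝ W)) = 0 := by
  obtain ⟨halt, hval, hbia⟩ := hK
  obtain ⟨h, hh⟩ := hval (x, 0) (y, 0)
  suffices hz : h = 0 by rw [hh, hz, embW_zero]
  ext z
  rw [LinearMap.zero_apply, ← Module.forall_dual_apply_eq_zero_iff ℝ (h z)]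
  intro ψ
  obtain ⟨k1, hk1⟩ := hval (y, 0) ((0 : W), ψ)
  obtain ⟨k2, hk2⟩ := hval ((0 : W), ψ) (x, 0)
  have key := congrArg (fun v : W × Module.Dual ℝ W => v.2 z) (hbia (x, 0) (y, 0) ((0 : W), ψ))
  simp only [Prod.snd_add, LinearMap.add_apply, Prod.snd_zero, LinearMap.zero_apply,
    hh, hk1, hk2, embW_snd] at key
  simpa using key

omit [FiniteDimensional ℝ W] in
lemma structB (hK : inKW W R) (φ ψ : Module.Dual ℝ W) :
    R ((0 : W), φ) ((0 : W), ψ) = 0 := by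
  obtain ⟨halt, hval, hbia⟩ := hK
  obtain ⟨h, hh⟩ := hval ((0 : W), φ) ((0 : W), ψ)
  suffices hz : h = 0 by rw [hh, hz, embW_zero]
  ext x
  obtain ⟨k1, hk1⟩ := hval ((0 : W), ψ) (x, 0)
  obtain ⟨k2, hk2⟩ := hval (x, 0) ((0 : W), φ)
  have key := congrArg (fun v : W × Module.Dual ℝ W => v.1) (hbia ((0 : W), φ) ((0 : W), ψ) (x, 0))
  simp only [Prod.fst_add, Prod.fst_zero, hh, hk1, hk2, embW_fst] at key
  simpa using key

lemma structC (hK : inKW W R) (φ : Module.Dual ℝ W) (x y : W) :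
    R ((0 : W), φ) (x, (0 : Module.Dual ℝ W)) (y, (0 : Module.Dual ℝ W))
      = R ((0 : W), φ) (y, (0 : Module.Dual ℝ W)) (x, (0 : Module.Dual ℝ W)) := by
  obtain ⟨halt, hval, hbia⟩ := hK
  have h1 := hbia ((0 : W), φ) (x, 0) (y, 0)
  rw [structA ⟨halt, hval, hbia⟩ x y, antisym halt (y, 0) ((0 : W), φ)] at h1
  simp only [LinearMap.zero_apply, add_zero, LinearMap.neg_apply] at h1
  exact add_neg_eq_zero.mp h1

omit [FiniteDimensional ℝ W] in
lemma structD (hK : inKW W R) (φ ψ : Module.Dual ℝ W) (x : W) :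
    R ((0 : W), φ) (x, (0 : Module.Dual ℝ W)) ((0 : W), ψ)
      = R ((0 : W), ψ) (x, (0 : Module.Dual ℝ W)) ((0 : W), φ) := by
  obtain ⟨halt, hval, hbia⟩ := hK
  have h1 := hbia ((0 : W), φ) (x, 0) ((0 : W), ψ)
  rw [structB ⟨halt, hval, hbia⟩ ψ φ, antisym halt (x, 0) ((0 : W), ψ)] at h1
  simp only [LinearMap.zero_apply, add_zero, LinearMap.neg_apply] at h1
  exact add_neg_eq_zero.mp h1

end structural

end CurvAux

/-- For `V = W ⊕ W*` with its canonical symplectic form and `𝔥 ⊆ End V` the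
image of `gl(W)`:  `𝔥` is a Lie subalgebra of `sp(V,ω)` (via an injective Lie algebra
homomorphism); every `R ∈ K(𝔥)` vanishes on `W × W` and on `W* × W*` and satisfies
`R(φ,x)y = R(φ,y)x`; and `R ↦ σ_R` is a linear isomorphism from `K(𝔥)` onto
`S²(W) ⊗ S²(W*)`. -/
theorem curvature_space_glW
    (W : Type) [AddCommGroup W] [Module ℝ W] [FiniteDimensional ℝ W]
    (hW : 0 < Module.finrank ℝ W) :
    -- the embedding is an injective Lie algebra homomorphism into sp(V, ω)
    Function.Injective (embW W) ∧
    (∀ h k : Module.End ℝ W, embW W ⁅h, k⁆ = ⁅embW W h, embW W k⁆) ∧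
    (∀ (h : Module.End ℝ W) (p q : W × Module.Dual ℝ W),
      omegaW W (embW W h p) q + omegaW W p (embW W h q) = 0) ∧
    -- the structure of elements of K(𝔥)
    (∀ R, inKW W R →
      (∀ x y : W, R (x, (0 : Module.Dual ℝ W)) (y, (0 : Module.Dual ℝ W)) = 0) ∧
      (∀ φ ψ : Module.Dual ℝ W, R ((0 : W), φ) ((0 : W), ψ) = 0) ∧
      (∀ (φ : Module.Dual ℝ W) (x y : W),
        R ((0 : W), φ) (x, (0 : Module.Dual ℝ W)) (y, (0 : Module.Dual ℝ W))
          = R ((0 : W), φ) (y, (0 : Module.Dual ℝ W)) (x, (0 : Module.Dual ℝ W)))) ∧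
    -- `R ↦ σ_R` is linear
    (∀ (c : ℝ) R R' (x y : W) (φ ψ : Module.Dual ℝ W),
      sigmaW W (c • R + R') x y φ ψ = c * sigmaW W R x y φ ψ + sigmaW W R' x y φ ψ) ∧
    -- it maps `K(𝔥)` into `S²(W) ⊗ S²(W*)`
    (∀ R, inKW W R → isBiSymW W (sigmaW W R)) ∧
    -- it is injective on `K(𝔥)`
    (∀ R R', inKW W R → inKW W R' →
      (∀ (x y : W) (φ ψ : Module.Dual ℝ W), sigmaW W R x y φ ψ = sigmaW W R' x y φ ψ) →
      R = R') ∧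
    -- it is onto `S²(W) ⊗ S²(W*)`
    (∀ τ, isBiSymW W τ → ∃ R, inKW W R ∧
      ∀ (x y : W) (φ ψ : Module.Dual ℝ W), sigmaW W R x y φ ψ = τ x y φ ψ) := by
  classical
  obtain ⟨emb_inj, emb_brk, emb_omega⟩ :
      Function.Injective (embW W) ∧
      (∀ h k : Module.End ℝ W, embW W ⁅h, k⁆ = ⁅embW W h, embW W k⁆) ∧
      (∀ (h : Module.End ℝ W) (p q : W × Module.Dual ℝ W),
        omegaW W (embW W h p) q + omegaW W p (embW W h q) = 0) :=
    ⟨CurvAux.embW_inj, CurvAux.embW_bracket, CurvAux.embW_omega⟩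
  refine ⟨emb_inj, emb_brk, emb_omega, ?_, ?_, ?_, ?_, ?_⟩
  · -- structure of K(𝔥)
    intro R hK
    exact ⟨CurvAux.structA hK, CurvAux.structB hK, CurvAux.structC hK⟩
  · -- linearity of σ
    intro c R R' x y φ ψ
    simp [sigmaW]
  · -- σ_R is bisymmetric
    intro R hK
    obtain ⟨halt, hval, hbia⟩ := hK
    refine ⟨?_, ?_, ?_, ?_, ?_, ?_⟩
    · intro c x x' y φ ψ
      have e : ((c • x + x' : W), (0 : Module.Dual ℝ W))
          = c • ((x, (0 : Module.Dual ℝ W)) : W × Module.Dual ℝ W) + (x', 0) := by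
        simp [Prod.ext_iff]
      unfold sigmaW
      rw [e]
      simp only [map_add, map_smul, LinearMap.add_apply, LinearMap.smul_apply, Prod.fst_add,
        Prod.smul_fst, smul_eq_mul]
    · intro c x y y' φ ψ
      have e : ((c • y + y' : W), (0 : Module.Dual ℝ W))
          = c • ((y, (0 : Module.Dual ℝ W)) : W × Module.Dual ℝ W) + (y', 0) := by
        simp [Prod.ext_iff]
      unfold sigmaW
      rw [e]
      simp only [map_add, map_smul, LinearMap.add_apply, LinearMap.smul_apply, Prod.fst_add,
        Prod.smul_fst, smul_eq_mul]
    · intro c x y φ φ' ψ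
      have e : (((0 : W), c • φ + φ') : W × Module.Dual ℝ W)
          = c • (((0 : W), φ) : W × Module.Dual ℝ W) + ((0 : W), φ') := by
        simp [Prod.ext_iff]
      unfold sigmaW
      rw [e]
      simp only [map_add, map_smul, LinearMap.add_apply, LinearMap.smul_apply, Prod.fst_add,
        Prod.smul_fst, smul_eq_mul]
    · intro c x y φ ψ ψ'
      simp [sigmaW]
    · intro x y φ ψ
      exact congrArg (fun v : W × Module.Dual ℝ W => ψ v.1)
        (CurvAux.structC ⟨halt, hval, hbia⟩ φ x y)
    · intro x y φ ψ
      obtain ⟨h, hh⟩ := hval ((0 : W), φ) (x, (0 : Module.Dual ℝ W))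
      obtain ⟨k, hk⟩ := hval ((0 : W), ψ) (x, (0 : Module.Dual ℝ W))
      have hD := CurvAux.structD ⟨halt, hval, hbia⟩ φ ψ x
      rw [hh, hk] at hD
      have h2 := congrArg (fun v : W × Module.Dual ℝ W => v.2 y) hD
      simp only [CurvAux.embW_snd] at h2
      unfold sigmaW
      rw [hh, hk]
      simp only [CurvAux.embW_fst]
      simpa using h2
  · -- injectivity
    intro R R' hKR hKR' hσ
    have key1 : ∀ (φ : Module.Dual ℝ W) (x : W),
        R ((0 : W), φ) (x, (0 : Module.Dual ℝ W)) = R' ((0 : W), φ) (x, (0 : Module.Dual ℝ W)) := by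
      intro φ x
      obtain ⟨h, hh⟩ := hKR.2.1 ((0 : W), φ) (x, (0 : Module.Dual ℝ W))
      obtain ⟨k, hk⟩ := hKR'.2.1 ((0 : W), φ) (x, (0 : Module.Dual ℝ W))
      rw [hh, hk]
      congr 1
      ext y
      rw [← sub_eq_zero, ← Module.forall_dual_apply_eq_zero_iff ℝ]
      intro ψ
      have := hσ x y φ ψ
      unfold sigmaW at this
      rw [hh, hk] at this
      simp only [CurvAux.embW_fst] at this
      rw [map_sub, this, sub_self]
    have key : ∀ (a : W) (b : Module.Dual ℝ W) (c : W) (d : Module.Dual ℝ W),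
        R (a, b) (c, d) = R' (a, b) (c, d) := by
      intro a b c d
      have e1 : ((a, b) : W × Module.Dual ℝ W) = (a, 0) + (0, b) := by simp
      have e2 : ((c, d) : W × Module.Dual ℝ W) = (c, 0) + (0, d) := by simp
      have hanti : R (a, (0 : Module.Dual ℝ W)) ((0 : W), d)
          = R' (a, (0 : Module.Dual ℝ W)) ((0 : W), d) := by
        rw [CurvAux.antisym hKR.1 (a, 0) ((0 : W), d),
          CurvAux.antisym hKR'.1 (a, 0) ((0 : W), d), key1 d a]
      rw [e1, e2]
      simp only [map_add, LinearMap.add_apply, CurvAux.structA hKR, CurvAux.structA hKR',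
        CurvAux.structB hKR, CurvAux.structB hKR', key1, hanti]
    refine LinearMap.ext fun p => LinearMap.ext fun q => ?_
    have := key p.1 p.2 q.1 q.2
    simpa using this
  · -- surjectivity
    intro τ hτ
    exact ⟨CurvAux.Rcon τ hτ, CurvAux.Rcon_inKW hτ, CurvAux.Rcon_sigma hτ⟩
end

section
/- Let (V, ω) be a symplectic vector space over ℝ, let 𝔥 := sp(V, ω), and let K(𝔥) be the space of alternating bilinear maps R : V × V → 𝔥 satisfying R(x,y)z + R(y,z)x + R(z,x)y = 0 for all x,y,z ∈ V. Define (x∘y)z := ω(x,z)y + ω(y,z)x and, for h ∈ 𝔥, R_h(x,y) := 2ω(x,y)h + x∘(hy) − y∘(hx). Then: (i) if dim V = 2, every R ∈ K(𝔥) equals R_h for some h ∈ 𝔥; (ii) if dim V ≥ 4, there exists a nonzero R ∈ K(𝔥) whose Ricci contraction vanishes, i.e. tr(v ↦ R(x,v)y) = 0 for all x,y ∈ V. -/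
/-- The symplectic Lie algebra `sp(V, ω)` as a submodule of `End V`. -/
def spSub (V : Type) [AddCommGroup V] [Module ℝ V] (ω : LinearMap.BilinForm ℝ V) :
    Submodule ℝ (Module.End ℝ V) where
  carrier := {h | ∀ x y : V, ω (h x) y + ω x (h y) = 0}
  add_mem' := by
    intro a b ha hb x y
    have h1 := ha x y
    have h2 := hb x y
    simp only [LinearMap.add_apply, map_add, LinearMap.add_apply] at *
    linarith
  zero_mem' := by
    intro x y
    simp
  smul_mem' := by
    intro c a ha x y
    have h1 := ha x y
    simp only [LinearMap.smul_apply, map_smul, smul_eq_mul] at *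
    linear_combination c * h1

/-- The product `(x∘y)z = ω(x,z)y + ω(y,z)x`, as an element of `sp(V, ω)`. -/
def circSp (V : Type) [AddCommGroup V] [Module ℝ V] (ω : LinearMap.BilinForm ℝ V)
    (hω_alt : LinearMap.IsAlt ω) (x y : V) : ↥(spSub V ω) :=
  ⟨(ω x).smulRight y + (ω y).smulRight x, by
    intro z w
    have h1 : ω z y = - ω y z := (hω_alt.neg y z).symm
    have h2 : ω z x = - ω x z := (hω_alt.neg x z).symm
    simp only [LinearMap.add_apply, LinearMap.smulRight_apply, map_add, map_smul,
      LinearMap.smul_apply, smul_eq_mul]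
    rw [h1, h2]
    ring⟩


lemma trace_smulRight'' (V : Type) [AddCommGroup V] [Module ℝ V] [FiniteDimensional ℝ V]
    (f : V →ₗ[ℝ] ℝ) (x : V) : LinearMap.trace ℝ V (f.smulRight x) = f x := by
  have h : f.smulRight x = dualTensorHom ℝ V V (f ⊗ₜ x) := by
    ext v; simp [dualTensorHom_apply]
  rw [h, LinearMap.trace_eq_contract_apply, contractLeft_apply]

set_option maxHeartbeats 2000000 in
/-- Let `(V, ω)` be a real symplectic vector space and `𝔥 := sp(V, ω)`.
(i) If `dim V = 2`, every element of the curvature space `K(𝔥)` is of the form `R_h`.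
(ii) If `dim V ≥ 4`, there is a nonzero element of `K(𝔥)` with vanishing Ricci contraction. -/
theorem curvature_space_sp
    (V : Type) [AddCommGroup V] [Module ℝ V] [FiniteDimensional ℝ V]
    (ω : LinearMap.BilinForm ℝ V)
    (hω_alt : LinearMap.IsAlt ω) (hω_nd : LinearMap.BilinForm.Nondegenerate ω) :
    -- (i)
    (Module.finrank ℝ V = 2 →
      ∀ R : V →ₗ[ℝ] V →ₗ[ℝ] ↥(spSub V ω),
        (∀ x : V, R x x = 0) →
        (∀ x y z : V, (R x y : Module.End ℝ V) z + (R y z : Module.End ℝ V) x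
          + (R z x : Module.End ℝ V) y = 0) →
        ∃ h : ↥(spSub V ω), ∀ x y : V,
          R x y = (2 * ω x y) • h
            + circSp V ω hω_alt x ((h : Module.End ℝ V) y)
            - circSp V ω hω_alt y ((h : Module.End ℝ V) x)) ∧
    -- (ii)
    (4 ≤ Module.finrank ℝ V →
      ∃ R : V →ₗ[ℝ] V →ₗ[ℝ] ↥(spSub V ω),
        (∀ x : V, R x x = 0) ∧
        (∀ x y z : V, (R x y : Module.End ℝ V) z + (R y z : Module.End ℝ V) x
          + (R z x : Module.End ℝ V) y = 0) ∧
        R ≠ 0 ∧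
        (∀ x y : V,
          LinearMap.trace ℝ V ((((spSub V ω).subtype ∘ₗ R x).flip) y) = 0)) := by
  
  constructor
  ·
    intro hr R hRxx hBian
    have hnt : Nontrivial V := by
      apply Module.nontrivial_of_finrank_pos (R := ℝ); omega
    obtain ⟨e, he⟩ := exists_ne (0 : V)
    obtain ⟨f, hef⟩ : ∃ f, ω e f ≠ 0 := by
      by_contra hc
      push_neg at hc
      exact he (hω_nd.1 e hc)
    have hee : ω e e = 0 := hω_alt e
    have hff : ω f f = 0 := hω_alt f
    have hfe : ω f e = -(ω e f) := (hω_alt.neg e f).symm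
    have hli : LinearIndependent ℝ ![e, f] := by
      rw [LinearIndependent.pair_iff' he]
      intro a ha
      apply hef
      rw [← ha]
      simp [hee]
    have hcard : Fintype.card (Fin 2) = Module.finrank ℝ V := by simp [hr]
    set Bas : Module.Basis (Fin 2) ℝ V := basisOfLinearIndependentOfCardEqFinrank hli hcard with hBas
    have hB0 : Bas 0 = e := by
      rw [hBas, coe_basisOfLinearIndependentOfCardEqFinrank]
      simp
    have hB1 : Bas 1 = f := by
      rw [hBas, coe_basisOfLinearIndependentOfCardEqFinrank]
      simp
    have hspan : ∀ v : V, ω e f • v = ω v f • e + ω e v • f := by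
      have hmap : ω e f • (LinearMap.id : V →ₗ[ℝ] V)
          = (ω.flip f).smulRight e + (ω e).smulRight f := by
        refine Bas.ext fun i => ?_
        fin_cases i <;>
          simp [hB0, hB1, hee, hff, hfe]
      intro v
      have := LinearMap.congr_fun hmap v
      simpa using this
    set h : ↥(spSub V ω) := ((4 * ω e f)⁻¹) • R e f with hh
    have hsp : ∀ x y : V, ω ((h : Module.End ℝ V) x) y + ω x ((h : Module.End ℝ V) y) = 0 := h.2
    have h4 : (4 * ω e f) ≠ 0 := mul_ne_zero (by norm_num) hef
    have hRval : ((R e f : ↥(spSub V ω)) : Module.End ℝ V)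
        = (4 * ω e f) • (h : Module.End ℝ V) := by
      rw [hh, Submodule.coe_smul, smul_smul, mul_inv_cancel₀ h4, one_smul]
    have k1 : ω ((h : Module.End ℝ V) f) e = ω ((h : Module.End ℝ V) e) f := by
      have a1 := hsp f e
      have a2 : -(ω ((h : Module.End ℝ V) e) f) = ω f ((h : Module.End ℝ V) e) :=
        hω_alt.neg _ _
      linarith
    have k2 : ω ((h : Module.End ℝ V) e) e = -(ω e ((h : Module.End ℝ V) e)) := by
      have := hsp e e; linarith
    have k3 := hspan ((h : Module.End ℝ V) e)
    have k5 := hspan ((h : Module.End ℝ V) f)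
    have k6 : ω ((h : Module.End ℝ V) e) f = -(ω e ((h : Module.End ℝ V) f)) := by
      have := hsp e f; linarith
    have hKI : ((ω e).smulRight ((h : Module.End ℝ V) f)
          + (ω ((h : Module.End ℝ V) f)).smulRight e)
        - ((ω f).smulRight ((h : Module.End ℝ V) e)
          + (ω ((h : Module.End ℝ V) e)).smulRight f)
        = (2 * ω e f) • (h : Module.End ℝ V) := by
      refine Bas.ext fun i => ?_
      fin_cases i
      · simp only [Fin.zero_eta, Fin.isValue]
        rw [hB0]
        simp only [LinearMap.sub_apply, LinearMap.add_apply, LinearMap.smulRight_apply,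
          LinearMap.smul_apply]
        linear_combination (norm := module) hee • ((h : Module.End ℝ V) f) + k1 • e - k2 • f
          - k3 - hfe • ((h : Module.End ℝ V) e)
      · simp only [Fin.mk_one, Fin.isValue]
        rw [hB1]
        simp only [LinearMap.sub_apply, LinearMap.add_apply, LinearMap.smulRight_apply,
          LinearMap.smul_apply]
        linear_combination (norm := module) - k5 - hff • ((h : Module.End ℝ V) e) - k6 • f
    set circB : V →ₗ[ℝ] V →ₗ[ℝ] Module.End ℝ V := LinearMap.mk₂ ℝ
        (fun x y => (ω x).smulRight y + (ω y).smulRight x)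
        (by intro m m' n; ext z
            simp only [LinearMap.add_apply, LinearMap.smulRight_apply, map_add, smul_eq_mul]
            module)
        (by intro a m n; ext z
            simp only [LinearMap.add_apply, LinearMap.smulRight_apply, map_smul,
              LinearMap.smul_apply, smul_eq_mul]
            module)
        (by intro m n n'; ext z
            simp only [LinearMap.add_apply, LinearMap.smulRight_apply, map_add, smul_eq_mul]
            module)
        (by intro a m n; ext z
            simp only [LinearMap.add_apply, LinearMap.smulRight_apply, map_smul,
              LinearMap.smul_apply, smul_eq_mul]
            module)
        with hcircB
    set Rv : V →ₗ[ℝ] V →ₗ[ℝ] Module.End ℝ V := R.compr₂ (spSub V ω).subtype with hRv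
    set Φ : V →ₗ[ℝ] V →ₗ[ℝ] Module.End ℝ V :=
      ((2:ℝ) • ω).compr₂ (LinearMap.toSpanSingleton ℝ (Module.End ℝ V) (h : Module.End ℝ V))
        + circB.compl₂ (h : Module.End ℝ V)
        - (circB.compl₂ (h : Module.End ℝ V)).flip with hΦ
    have hRas : R f e = - R e f := by
      have h1 : R e f + R f e = 0 := by
        have h2 := hRxx (e + f)
        simp only [map_add, LinearMap.add_apply, hRxx] at h2
        linear_combination (norm := module) h2
      exact (neg_eq_of_add_eq_zero_right h1).symm
    have hmain : Rv = Φ := by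
      refine Bas.ext fun i => Bas.ext fun j => ?_
      have expand : ∀ x y : V, Rv x y = ((R x y : ↥(spSub V ω)) : Module.End ℝ V) := by
        intro x y; rw [hRv]; rfl
      have expandΦ : ∀ x y : V, Φ x y = (2 * ω x y) • (h : Module.End ℝ V)
          + ((ω x).smulRight ((h : Module.End ℝ V) y)
            + (ω ((h : Module.End ℝ V) y)).smulRight x)
          - ((ω y).smulRight ((h : Module.End ℝ V) x)
            + (ω ((h : Module.End ℝ V) x)).smulRight y) := by
        intro x y
        rw [hΦ]
        simp only [LinearMap.sub_apply, LinearMap.add_apply, LinearMap.compr₂_apply,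
          LinearMap.compl₂_apply, LinearMap.flip_apply, LinearMap.smul_apply,
          LinearMap.toSpanSingleton_apply, hcircB, LinearMap.mk₂_apply, smul_eq_mul]
      fin_cases i <;> fin_cases j <;> simp only [Fin.zero_eta, Fin.mk_one, Fin.isValue] <;>
        rw [expand, expandΦ]
      · -- (e, e)
        rw [hB0, hRxx e]
        simp only [ZeroMemClass.coe_zero]
        rw [hee]
        module
      · -- (e, f)
        rw [hB0, hB1]
        linear_combination (norm := module) hRval - hKI
      · -- (f, e)
        rw [hB1, hB0, hRas]
        simp only [NegMemClass.coe_neg]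
        linear_combination (norm := module) - hRval + hKI - hfe • ((2:ℝ) • (h : Module.End ℝ V))
      · -- (f, f)
        rw [hB1, hRxx f]
        simp only [ZeroMemClass.coe_zero]
        rw [hff]
        module
    refine ⟨h, fun x y => ?_⟩
    apply Subtype.ext
    have hxy := LinearMap.congr_fun (LinearMap.congr_fun hmain x) y
    rw [hRv, hΦ] at hxy
    simp only [LinearMap.sub_apply, LinearMap.add_apply, LinearMap.compr₂_apply,
      LinearMap.compl₂_apply, LinearMap.flip_apply, LinearMap.smul_apply,
      LinearMap.toSpanSingleton_apply, hcircB, LinearMap.mk₂_apply, smul_eq_mul,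
      Submodule.subtype_apply] at hxy
    simp only [Submodule.coe_add, SetLike.val_smul, AddSubgroupClass.coe_sub, circSp]
    exact hxy
  ·
    intro hdim
    have hnt : Nontrivial V := by
      apply Module.nontrivial_of_finrank_pos (R := ℝ); omega
    obtain ⟨u1, hu1⟩ := exists_ne (0 : V)
    obtain ⟨v1, hv1⟩ : ∃ v, ω u1 v ≠ 0 := by
      by_contra hc
      push_neg at hc
      exact hu1 (hω_nd.1 u1 hc)
    set P := (ω u1).prod (ω v1) with hP
    have hKrank : LinearMap.ker P ≠ ⊥ := by
      intro hbot
      have h1 := LinearMap.finrank_range_add_finrank_ker P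
      have h2 : Module.finrank ℝ (LinearMap.range P) ≤ 2 := by
        have := Submodule.finrank_le (LinearMap.range P)
        simpa using this
      rw [hbot, finrank_bot] at h1
      omega
    obtain ⟨u2, hu2K, hu2⟩ := Submodule.ne_bot_iff _ |>.mp hKrank
    have horth : ω u1 u2 = 0 ∧ ω v1 u2 = 0 := by
      have := LinearMap.mem_ker.mp hu2K
      rw [hP] at this
      simpa [LinearMap.prod_apply, Prod.ext_iff] using this
    obtain ⟨ho1, ho2⟩ := horth
    obtain ⟨v2, hv2⟩ : ∃ v, ω u2 v ≠ 0 := by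
      by_contra hc
      push_neg at hc
      exact hu2 (hω_nd.1 u2 hc)
    have ho1' : ω u2 u1 = 0 := by rw [← hω_alt.neg u1 u2, ho1, neg_zero]
    have ho2' : ω u2 v1 = 0 := by rw [← hω_alt.neg v1 u2, ho2, neg_zero]
    set σ := circSp V ω hω_alt u1 u2 with hσ
    set R0 : V →ₗ[ℝ] V →ₗ[ℝ] ↥(spSub V ω) := LinearMap.mk₂ ℝ
      (fun x y => (ω u1 x * ω u2 y - ω u2 x * ω u1 y) • σ)
      (by intro m m' n; rw [← add_smul]; congr 1; simp; ring)
      (by intro c m n; rw [← mul_smul]; congr 1; simp; ring)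
      (by intro m n n'; rw [← add_smul]; congr 1; simp; ring)
      (by intro c m n; rw [← mul_smul]; congr 1; simp; ring) with hR0
    refine ⟨R0, ?_, ?_, ?_, ?_⟩
    · intro x; simp only [hR0, LinearMap.mk₂_apply]
      rw [show (ω u1 x * ω u2 x - ω u2 x * ω u1 x) = 0 by ring, zero_smul]
    · intro x y z
      simp only [hR0, LinearMap.mk₂_apply, SetLike.val_smul, LinearMap.smul_apply, hσ, circSp,
        LinearMap.add_apply, LinearMap.smulRight_apply]
      module
    · intro h0
      have h1 : ((R0 v1 v2 : ↥(spSub V ω)) : Module.End ℝ V) v1 = 0 := by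
        rw [h0]; simp
      simp only [hR0, LinearMap.mk₂_apply, SetLike.val_smul, LinearMap.smul_apply, hσ, circSp,
        LinearMap.add_apply, LinearMap.smulRight_apply, ho2'] at h1
      have h2 : (ω u1 v1 * ω u2 v2 * ω u1 v1) • u2 = 0 := by
        rw [← h1]
        module
      rcases smul_eq_zero.mp h2 with h3 | h3
      · have := mul_ne_zero (mul_ne_zero hv1 hv2) hv1
        exact this h3
      · exact hu2 h3
    · intro x y
      have hrw : (((spSub V ω).subtype ∘ₗ R0 x).flip) y
          = (ω u1 x • ω u2 - ω u2 x • ω u1).smulRight ((σ : Module.End ℝ V) y) := by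
        ext v
        simp only [hR0, LinearMap.flip_apply, LinearMap.comp_apply, Submodule.subtype_apply,
          LinearMap.mk₂_apply, SetLike.val_smul, LinearMap.smul_apply, LinearMap.smulRight_apply,
          LinearMap.sub_apply, smul_eq_mul]
      rw [hrw, trace_smulRight'']
      simp [hσ, circSp, map_add, map_smul, ho1, ho1', hω_alt u1, hω_alt u2]
end

section
/- Let (V, ω) be a symplectic vector space over ℝ, let 𝔥 ⊆ sp(V, ω) be a Lie subalgebra, and let R : V × V → 𝔥 be an alternating bilinear map satisfying the first Bianchi identity R(x,y)z + R(y,z)x + R(z,x)y = 0 for all x,y,z ∈ V. Define Ric(R)(x,y) := tr(v ↦ R(x,v)y). Let (e_1,…,e_n,f_1,…,f_n) be a symplectic basis of V, i.e. ω(e_i,f_j) = δ_{ij} and ω(e_i,e_j) = ω(f_i,f_j) = 0 for all i,j. Then Ric(R)(x,y) = −ω((Σ_{i=1}^n R(e_i,f_i))x, y) for all x,y ∈ V. In particular, Ric(R) is a symmetric bilinear form on V. -/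
attribute [local instance 100] LieRing.ofAssociativeRing

/-- Let `(V, ω)` be a symplectic vector space over `ℝ`, `𝔥 ⊆ sp(V, ω)` a Lie
subalgebra and `R : V × V → 𝔥` an alternating bilinear map satisfying the first Bianchi
identity.  For a symplectic basis `(e_i, f_i)` one has
`Ric(R)(x,y) = −ω((Σ_i R(e_i,f_i)) x, y)`; in particular `Ric(R)` is symmetric. -/
theorem special_symplectic_ricci_formula
    (V : Type) [AddCommGroup V] [Module ℝ V] [FiniteDimensional ℝ V]
    (n : ℕ)
    (ω : LinearMap.BilinForm ℝ V)
    (hω_alt : LinearMap.IsAlt ω) (hω_nd : LinearMap.BilinForm.Nondegenerate ω)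
    (𝔥 : LieSubalgebra ℝ (Module.End ℝ V))
    (h_sp : ∀ h ∈ 𝔥, ∀ x y : V, ω (h x) y + ω x (h y) = 0)
    (R : V →ₗ[ℝ] V →ₗ[ℝ] ↥𝔥)
    (hR_alt : ∀ x : V, R x x = 0)
    (hR_bianchi : ∀ x y z : V,
      (R x y : Module.End ℝ V) z + (R y z : Module.End ℝ V) x
        + (R z x : Module.End ℝ V) y = 0)
    (b : Module.Basis (Fin n ⊕ Fin n) ℝ V)
    (hb1 : ∀ i j : Fin n, ω (b (Sum.inl i)) (b (Sum.inr j)) = if i = j then 1 else 0)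
    (hb2 : ∀ i j : Fin n, ω (b (Sum.inl i)) (b (Sum.inl j)) = 0)
    (hb3 : ∀ i j : Fin n, ω (b (Sum.inr i)) (b (Sum.inr j)) = 0) :
    (∀ x y : V,
      LinearMap.trace ℝ V (((𝔥.toSubmodule.subtype ∘ₗ R x).flip) y)
        = - ω (((∑ i : Fin n, R (b (Sum.inl i)) (b (Sum.inr i)) : ↥𝔥) :
            Module.End ℝ V) x) y) ∧
    (∀ x y : V,
      LinearMap.trace ℝ V (((𝔥.toSubmodule.subtype ∘ₗ R x).flip) y)
        = LinearMap.trace ℝ V (((𝔥.toSubmodule.subtype ∘ₗ R y).flip) x)) := by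
  classical
  -- ω is skew: ω x y = - ω y x
  have hskew : ∀ x y : V, ω x y = - ω y x := fun x y => (hω_alt.neg y x).symm
  -- symmetry of ω(h·,·) for h ∈ 𝔥
  have hsym : ∀ h : ↥𝔥, ∀ x y : V,
      ω ((h : Module.End ℝ V) x) y = ω ((h : Module.End ℝ V) y) x := by
    intro h x y
    have h1 := h_sp h h.2 x ((h : Module.End ℝ V) y)  -- not needed
    have h2 := h_sp h h.2 x y
    rw [hskew x ((h : Module.End ℝ V) y)] at h2
    linarith
  -- repr via ω
  have hrepr1 : ∀ (v : V) (j : Fin n), b.repr v (Sum.inl j) = ω v (b (Sum.inr j)) := by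
    intro v j
    conv_rhs => rw [← b.sum_repr v]
    simp only [map_sum, LinearMap.sum_apply, map_smul, LinearMap.smul_apply,
      smul_eq_mul, Fintype.sum_sum_type, hb1, hb3, mul_ite, mul_one, mul_zero]
    simp [hb1, hb2, hb3]
  have hrepr2 : ∀ (v : V) (j : Fin n), b.repr v (Sum.inr j) = ω (b (Sum.inl j)) v := by
    intro v j
    conv_rhs => rw [← b.sum_repr v]
    simp only [map_sum, map_smul, smul_eq_mul, Fintype.sum_sum_type, hb2, hb1,
      mul_ite, mul_one, mul_zero]
    simp [hb1, hb2, hb3]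
  -- trace formula
  have htr : ∀ T : Module.End ℝ V, LinearMap.trace ℝ V T
      = ∑ j : Fin n, ω (T (b (Sum.inl j))) (b (Sum.inr j))
        + ∑ j : Fin n, ω (b (Sum.inl j)) (T (b (Sum.inr j))) := by
    intro T
    rw [LinearMap.trace_eq_matrix_trace ℝ b, Matrix.trace]
    rw [Fintype.sum_sum_type]
    congr 1
    · exact Finset.sum_congr rfl fun j _ => by
        rw [Matrix.diag_apply, LinearMap.toMatrix_apply, hrepr1]
    · exact Finset.sum_congr rfl fun j _ => by
        rw [Matrix.diag_apply, LinearMap.toMatrix_apply, hrepr2]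
  -- R antisymmetric
  have hRanti : ∀ x y : V, R x y = - R y x := by
    intro x y
    have h := hR_alt (x + y)
    simp only [map_add, LinearMap.add_apply, hR_alt] at h
    have := h
    abel_nf at this ⊢
    linear_combination (norm := module) this
  -- the key pointwise identity
  have key : ∀ x y : V, ∀ i : Fin n,
      ω ((R x (b (Sum.inl i)) : Module.End ℝ V) y) (b (Sum.inr i))
        + ω (b (Sum.inl i)) ((R x (b (Sum.inr i)) : Module.End ℝ V) y)
      = - ω ((R (b (Sum.inl i)) (b (Sum.inr i)) : Module.End ℝ V) x) y := by
    intro x y i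
    set e := b (Sum.inl i)
    set f := b (Sum.inr i)
    have t1 : ω ((R x e : Module.End ℝ V) y) f = ω ((R x e : Module.End ℝ V) f) y :=
      hsym (R x e) y f
    have t2 : ω e ((R x f : Module.End ℝ V) y) = - ω ((R x f : Module.End ℝ V) e) y := by
      rw [hskew e ((R x f : Module.End ℝ V) y), hsym (R x f) y e]
    have cfe : (R f e : Module.End ℝ V) x = -((R e f : Module.End ℝ V) x) := by
      rw [hRanti f e]; simp
    have cex : (R e x : Module.End ℝ V) f = -((R x e : Module.End ℝ V) f) := by
      rw [hRanti e x]; simp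
    have c2 := hR_bianchi x f e
    have hv : (R x f : Module.End ℝ V) e
        = (R e f : Module.End ℝ V) x + (R x e : Module.End ℝ V) f := by
      rw [cfe, cex] at c2
      linear_combination (norm := module) c2
    rw [t1, t2, hv, map_add, LinearMap.add_apply]
    ring
  -- assemble part 1
  have part1 : ∀ x y : V,
      LinearMap.trace ℝ V (((𝔥.toSubmodule.subtype ∘ₗ R x).flip) y)
        = - ω (((∑ i : Fin n, R (b (Sum.inl i)) (b (Sum.inr i)) : ↥𝔥) :
            Module.End ℝ V) x) y := by
    intro x y
    rw [htr]
    have happ : ∀ v : V, (((𝔥.toSubmodule.subtype ∘ₗ R x).flip) y) v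
        = (R x v : Module.End ℝ V) y := fun v => rfl
    simp only [happ]
    rw [← Finset.sum_add_distrib, Finset.sum_congr rfl (fun i _ => key x y i)]
    rw [AddSubmonoidClass.coe_finset_sum, LinearMap.sum_apply, map_sum,
      LinearMap.sum_apply, ← Finset.sum_neg_distrib]
  refine ⟨part1, fun x y => ?_⟩
  rw [part1 x y, part1 y x,
    hsym (∑ i : Fin n, R (b (Sum.inl i)) (b (Sum.inr i))) x y]
end

section
/- Let (V, ω) be a symplectic vector space over ℝ with dim V ≥ 4, let 𝔥 ⊆ sp(V, ω) be a Lie subalgebra, and let ∘ : V × V → 𝔥 be a symmetric bilinear map satisfying (x∘y)z − (x∘z)y = 2ω(y,z)x − ω(x,y)z + ω(x,z)y for all x,y,z ∈ V. If φ : V → V is a linear map such that φ(x)∘y = φ(y)∘x for all x,y ∈ V, then φ is a scalar multiple of the identity of V. -/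
attribute [local instance] LieRing.ofAssociativeRing

/-- Let `(V, ω)` be a symplectic vector space over `ℝ` with `dim V ≥ 4`,
`𝔥 ⊆ sp(V, ω)` a Lie subalgebra, and `∘ : V × V → 𝔥` a symmetric bilinear map satisfying the
identity (A2).  If a linear map `φ : V → V` satisfies `φ(x)∘y = φ(y)∘x` for all `x, y`, then
`φ` is a scalar multiple of the identity. -/
theorem special_symplectic_schur
    (V : Type) [AddCommGroup V] [Module ℝ V] [FiniteDimensional ℝ V]
    (hdim : 4 ≤ Module.finrank ℝ V)
    (ω : LinearMap.BilinForm ℝ V)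
    (hω_alt : LinearMap.IsAlt ω) (hω_nd : LinearMap.BilinForm.Nondegenerate ω)
    (𝔥 : LieSubalgebra ℝ (Module.End ℝ V))
    (h_sp : ∀ h ∈ 𝔥, ∀ x y : V, ω (h x) y + ω x (h y) = 0)
    (circ : V →ₗ[ℝ] V →ₗ[ℝ] ↥𝔥)
    (h_circ_symm : ∀ x y : V, circ x y = circ y x)
    (hA2 : ∀ x y z : V,
      (circ x y : Module.End ℝ V) z - (circ x z : Module.End ℝ V) y
        = (2 * ω y z) • x - ω x y • z + ω x z • y)
    (φ : V →ₗ[ℝ] V)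
    (hφ : ∀ x y : V, circ (φ x) y = circ (φ y) x) :
    ∃ c : ℝ, φ = c • LinearMap.id := by
  -- skew-symmetry of ω
  have hsk : ∀ a b : V, ω a b = - ω b a := fun a b => (hω_alt.neg b a).symm
  -- The fundamental identity derived from (A2) and the symmetry condition on φ
  have key : ∀ x y z : V,
      (2 * ω y z) • φ x - (2 * ω x z) • φ y + (2 * ω x y) • φ z
        = (ω (φ y) z - ω (φ z) y) • x + (ω (φ z) x - ω (φ x) z) • y
          + (ω (φ x) y - ω (φ y) x) • z := by
    intro x y z
    have h1 := hA2 (φ x) y z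
    have h2 := hA2 (φ y) x z
    have h3 := hA2 (φ z) x y
    have e1 : (circ (φ x) y : Module.End ℝ V) z = (circ (φ y) x : Module.End ℝ V) z := by
      rw [hφ x y]
    have e2 : (circ (φ x) z : Module.End ℝ V) y = (circ (φ z) x : Module.End ℝ V) y := by
      rw [hφ x z]
    have e3 : (circ (φ y) z : Module.End ℝ V) x = (circ (φ z) y : Module.End ℝ V) x := by
      rw [hφ y z]
    linear_combination (norm := module) - h1 + h2 - h3 + e1 - e2 + e3
  -- Existence of a partial symplectic basis adapted to a nonzero vector
  have basis : ∀ x : V, x ≠ 0 → ∃ f1 e2 f2 : V,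
      ω x f1 = 1 ∧ ω x e2 = 0 ∧ ω f1 e2 = 0 ∧ ω x f2 = 0 ∧ ω f1 f2 = 0 ∧ ω e2 f2 = 1 := by
    intro x hx
    -- find f1 with ω x f1 = 1
    have hex : ∃ f : V, ω x f ≠ 0 := by
      by_contra hcon
      push_neg at hcon
      exact hx (hω_nd.1 x hcon)
    obtain ⟨f, hf⟩ := hex
    set f1 : V := (ω x f)⁻¹ • f with hf1def
    have hxf1 : ω x f1 = 1 := by
      rw [hf1def, map_smul, smul_eq_mul, inv_mul_cancel₀ hf]
    -- the common kernel of ω x and ω f1 is nontrivial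
    set g : V →ₗ[ℝ] ℝ × ℝ := (ω x).prod (ω f1) with hgdef
    have hker : ∃ w : V, w ∈ LinearMap.ker g ∧ w ≠ 0 := by
      by_contra hcon
      push_neg at hcon
      have hbot : LinearMap.ker g = ⊥ := by
        rw [Submodule.eq_bot_iff]
        intro w hw
        by_contra hw0
        exact hw0 (hcon w hw)
      have hrk := LinearMap.finrank_range_add_finrank_ker g
      rw [hbot, finrank_bot, add_zero] at hrk
      have hle : Module.finrank ℝ (LinearMap.range g) ≤ Module.finrank ℝ (ℝ × ℝ) :=
        Submodule.finrank_le _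
      rw [Module.finrank_prod, Module.finrank_self] at hle
      omega
    obtain ⟨e2, he2mem, he2ne⟩ := hker
    have he2ker : ω x e2 = 0 ∧ ω f1 e2 = 0 := by
      have := LinearMap.mem_ker.mp he2mem
      rw [hgdef, LinearMap.prod_apply] at this
      exact ⟨congrArg Prod.fst this, congrArg Prod.snd this⟩
    obtain ⟨hxe2, hf1e2⟩ := he2ker
    -- find v with ω e2 v ≠ 0, and project it into the common kernel
    have hex2 : ∃ v : V, ω e2 v ≠ 0 := by
      by_contra hcon
      push_neg at hcon
      exact he2ne (hω_nd.1 e2 hcon)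
    obtain ⟨v, hv⟩ := hex2
    set w : V := v - (ω x v) • f1 + (ω f1 v) • x with hwdef
    have hxw : ω x w = 0 := by
      rw [hwdef]
      simp only [map_add, map_sub, map_smul, smul_eq_mul, hxf1, hω_alt.self_eq_zero x]
      ring
    have hf1w : ω f1 w = 0 := by
      have hf1x : ω f1 x = -1 := by rw [hsk, hxf1]
      rw [hwdef]
      simp only [map_add, map_sub, map_smul, smul_eq_mul, hf1x, hω_alt.self_eq_zero f1]
      ring
    have he2w : ω e2 w = ω e2 v := by
      have he2x : ω e2 x = 0 := by rw [hsk, hxe2, neg_zero]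
      have he2f1 : ω e2 f1 = 0 := by rw [hsk, hf1e2, neg_zero]
      rw [hwdef]
      simp only [map_add, map_sub, map_smul, smul_eq_mul, he2x, he2f1]
      ring
    refine ⟨f1, e2, (ω e2 w)⁻¹ • w, hxf1, hxe2, hf1e2, ?_, ?_, ?_⟩
    · rw [map_smul, smul_eq_mul, hxw, mul_zero]
    · rw [map_smul, smul_eq_mul, hf1w, mul_zero]
    · rw [map_smul, smul_eq_mul, inv_mul_cancel₀ (by rw [he2w]; exact hv)]
  -- every vector is an eigenvector of φ
  have eig : ∀ x : V, ∃ c : ℝ, φ x = c • x := by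
    intro x
    by_cases hx : x = 0
    · exact ⟨0, by simp [hx]⟩
    obtain ⟨f1, e2, f2, h1, h2, h3, h4, h5, h6⟩ := basis x hx
    have k1 : ω f1 x = -1 := by rw [hsk, h1]
    have k2 : ω e2 x = 0 := by rw [hsk, h2, neg_zero]
    have k3 : ω e2 f1 = 0 := by rw [hsk, h3, neg_zero]
    have k4 : ω f2 x = 0 := by rw [hsk, h4, neg_zero]
    have k5 : ω f2 f1 = 0 := by rw [hsk, h5, neg_zero]
    have k6 : ω f2 e2 = -1 := by rw [hsk, h6]
    have k7 : ω x x = 0 := hω_alt.self_eq_zero x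
    have k8 : ω e2 e2 = 0 := hω_alt.self_eq_zero e2
    have k9 : ω f2 f2 = 0 := hω_alt.self_eq_zero f2
    have I := key x e2 f2
    have II := key e2 x f1
    have III := key f2 x f1
    rw [h2, h4, h6] at I
    rw [h1, k2, k3] at II
    rw [h1, k4, k5] at III
    simp only [mul_one, mul_zero, zero_smul, sub_zero, add_zero] at I II III
    -- extract scalar equations
    have A1 := congrArg (fun v => ω v e2) I
    have A2 := congrArg (fun v => ω v f2) I
    have A3 := congrArg (fun v => ω v x) II
    have A4 := congrArg (fun v => ω v x) III
    simp only [map_add, map_sub, map_smul, LinearMap.add_apply, LinearMap.sub_apply,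
      LinearMap.smul_apply, smul_eq_mul, h1, h2, h3, h4, h5, h6,
      k1, k2, k3, k4, k5, k6, k7, k8, k9] at A1 A2 A3 A4
    have hp : ω (φ e2) x = 0 := by linarith
    have hq : ω (φ x) e2 = 0 := by linarith
    have hr : ω (φ f2) x = 0 := by linarith
    have hs : ω (φ x) f2 = 0 := by linarith
    rw [hp, hq, hr, hs] at I
    simp only [sub_zero, zero_sub, neg_zero, zero_smul, add_zero] at I
    refine ⟨(ω (φ e2) f2 - ω (φ f2) e2) / 2, ?_⟩
    have h2ne : (2:ℝ) ≠ 0 := two_ne_zero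
    linear_combination (norm := module) (2:ℝ)⁻¹ • I
  -- conclude that the eigenvalue is uniform
  have : Nontrivial V := Module.nontrivial_of_finrank_pos (R := ℝ) (by omega : 0 < Module.finrank ℝ V)
  obtain ⟨x0, hx0⟩ := exists_ne (0 : V)
  obtain ⟨c, hc⟩ := eig x0
  refine ⟨c, ?_⟩
  ext y
  simp only [LinearMap.smul_apply, LinearMap.id_coe, id_eq]
  by_cases hy : y = 0
  · simp [hy]
  obtain ⟨d, hd⟩ := eig y
  by_cases hspan : ∃ t : ℝ, y = t • x0
  · obtain ⟨t, rfl⟩ := hspan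
    rw [map_smul, hc, smul_comm]
  · obtain ⟨e, he⟩ := eig (x0 + y)
    have hsum : c • x0 + d • y = e • x0 + e • y := by
      rw [← hc, ← hd, ← map_add, he, smul_add]
    have h1 : (c - e) • x0 = (e - d) • y := by
      linear_combination (norm := module) hsum
    by_cases hce : c = e
    · have h0 : (e - d) • y = 0 := by rw [← h1, hce, sub_self, zero_smul]
      rcases smul_eq_zero.mp h0 with h | h
      · have : d = c := by rw [hce]; linarith [sub_eq_zero.mp h]
        rw [hd, this]
      · exact absurd h hy
    · exfalso
      have hcene : c - e ≠ 0 := sub_ne_zero.mpr hce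
      have hx0eq : x0 = ((c - e)⁻¹ * (e - d)) • y := by
        rw [mul_smul, ← h1, smul_smul, inv_mul_cancel₀ hcene, one_smul]
      by_cases hz : (c - e)⁻¹ * (e - d) = 0
      · rw [hz, zero_smul] at hx0eq
        exact hx0 hx0eq
      · exact hspan ⟨((c - e)⁻¹ * (e - d))⁻¹, by
          rw [hx0eq, smul_smul, inv_mul_cancel₀ hz, one_smul]⟩
end

section
/- Let (V, ω) be a symplectic vector space over ℝ, let 𝔥 ⊆ sp(V, ω) be a Lie subalgebra, and let ∘ : V × V → 𝔥 be a symmetric bilinear map satisfying (x∘y)z − (x∘z)y = 2ω(y,z)x − ω(x,y)z + ω(x,z)y for all x,y,z ∈ V. For h ∈ 𝔥 define R_h(x,y) := 2ω(x,y)h + x∘(hy) − y∘(hx). Then R_h satisfies the first Bianchi identity: R_h(x,y)z + R_h(y,z)x + R_h(z,x)y = 0 for all x,y,z ∈ V. -/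
attribute [local instance] LieRing.ofAssociativeRing

/-- Let `(V, ω)` be a symplectic vector space over `ℝ`, `𝔥 ⊆ sp(V, ω)` a Lie
subalgebra and `∘ : V × V → 𝔥` a symmetric bilinear map satisfying the identity (A2). Then for
every `h ∈ 𝔥` the curvature map `R_h(x,y) = 2ω(x,y)h + x∘(hy) − y∘(hx)` satisfies the first
Bianchi identity. -/
theorem special_symplectic_Rh_bianchi
    (V : Type) [AddCommGroup V] [Module ℝ V] [FiniteDimensional ℝ V]
    (ω : LinearMap.BilinForm ℝ V)
    (hω_alt : LinearMap.IsAlt ω) (hω_nd : LinearMap.BilinForm.Nondegenerate ω)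
    (𝔥 : LieSubalgebra ℝ (Module.End ℝ V))
    (h_sp : ∀ h ∈ 𝔥, ∀ x y : V, ω (h x) y + ω x (h y) = 0)
    (circ : V →ₗ[ℝ] V →ₗ[ℝ] ↥𝔥)
    (h_circ_symm : ∀ x y : V, circ x y = circ y x)
    (hA2 : ∀ x y z : V,
      (circ x y : Module.End ℝ V) z - (circ x z : Module.End ℝ V) y
        = (2 * ω y z) • x - ω x y • z + ω x z • y)
    (h : ↥𝔥)
    (Rh : V → V → ↥𝔥)
    (hRh : ∀ x y : V, Rh x y
      = (2 * ω x y) • h + circ x ((h : Module.End ℝ V) y) - circ y ((h : Module.End ℝ V) x)) :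
    ∀ x y z : V,
      (Rh x y : Module.End ℝ V) z + (Rh y z : Module.End ℝ V) x
        + (Rh z x : Module.End ℝ V) y = 0 := by
  intro x y z
  have sp := h_sp (h : Module.End ℝ V) h.2
  have e1 : (circ x z : Module.End ℝ V) ((h : Module.End ℝ V) y)
      = (circ z x : Module.End ℝ V) ((h : Module.End ℝ V) y) := by rw [h_circ_symm]
  have e2 : (circ y x : Module.End ℝ V) ((h : Module.End ℝ V) z)
      = (circ x y : Module.End ℝ V) ((h : Module.End ℝ V) z) := by rw [h_circ_symm]
  have e3 : (circ z y : Module.End ℝ V) ((h : Module.End ℝ V) x)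
      = (circ y z : Module.End ℝ V) ((h : Module.End ℝ V) x) := by rw [h_circ_symm]
  have coeS : ∀ (c : ℝ) (g : ↥𝔥), ((c • g : ↥𝔥) : Module.End ℝ V) = c • (g : Module.End ℝ V) :=
    fun c g => by norm_cast
  simp only [hRh, coeS, AddSubgroupClass.coe_sub, AddMemClass.coe_add, SetLike.val_smul,
    LinearMap.add_apply, LinearMap.sub_apply, LinearMap.smul_apply]
  linear_combination (norm := skip)
    hA2 x ((h : Module.End ℝ V) y) z - hA2 y ((h : Module.End ℝ V) x) z
      + hA2 y ((h : Module.End ℝ V) z) x - hA2 z ((h : Module.End ℝ V) y) x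
      + hA2 z ((h : Module.End ℝ V) x) y - hA2 x ((h : Module.End ℝ V) z) y
      + e1 + e2 + e3
  match_scalars <;>
    linarith [sp x y, sp y z, sp x z, sp y x, sp z y, sp z x,
      hω_alt.neg x y, hω_alt.neg y z, hω_alt.neg z x,
      hω_alt.neg ((h : Module.End ℝ V) x) y, hω_alt.neg ((h : Module.End ℝ V) y) z,
      hω_alt.neg ((h : Module.End ℝ V) z) x, hω_alt.neg ((h : Module.End ℝ V) x) z,
      hω_alt.neg ((h : Module.End ℝ V) y) x, hω_alt.neg ((h : Module.End ℝ V) z) y]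
end

section
/- Let (V, ω) be a symplectic vector space over ℝ of dimension 2n, let 𝔥 ⊆ sp(V, ω) be a Lie subalgebra with a symmetric bilinear map ∘ : V × V → 𝔥 and a symmetric bilinear form ⟨·,·⟩ on 𝔥 satisfying ⟨h, x∘y⟩ = ω(hx,y) = ω(hy,x) for all h ∈ 𝔥, x,y ∈ V. Assume moreover that 2·tr_V(u v) + κ_𝔥(u,v) = −2(dim V + 4)·⟨u,v⟩ for all u,v ∈ 𝔥, where tr_V(uv) is the trace of the composite endomorphism and κ_𝔥 is the Killing form of 𝔥. Let (e_1,…,e_n,f_1,…,f_n) be a symplectic basis of V (ω(e_i,f_j) = δ_{ij}, ω(e_i,e_j) = ω(f_i,f_j) = 0), and set R_h(x,y) := 2ω(x,y)h + x∘(hy) − y∘(hx). Then for all h, u ∈ 𝔥: ⟨Σ_{i=1}^n R_h(e_i,f_i), u⟩ = 2(dim V + 2)·⟨h,u⟩ + (1/2)·κ_𝔥(h,u). -/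
attribute [local instance 100] LieRing.ofAssociativeRing

/-- Let `(V, ω)` be a symplectic vector space over `ℝ` of dimension `2n`,
`𝔥 ⊆ sp(V, ω)` a Lie subalgebra with a symmetric product `∘ : V × V → 𝔥` and a symmetric
bilinear form `⟨·,·⟩` satisfying (A1) and `2 tr_V(uv) + κ_𝔥(u,v) = −2(dim V + 4)⟨u,v⟩`.
Then for a symplectic basis `(e_i, f_i)` and all `h, u ∈ 𝔥`:
`⟨Σ_i R_h(e_i,f_i), u⟩ = 2(dim V + 2)⟨h,u⟩ + κ_𝔥(h,u)/2`. -/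
theorem special_symplectic_ricci_computation
    (V : Type) [AddCommGroup V] [Module ℝ V] [FiniteDimensional ℝ V]
    (n : ℕ)
    (ω : LinearMap.BilinForm ℝ V)
    (hω_alt : LinearMap.IsAlt ω) (hω_nd : LinearMap.BilinForm.Nondegenerate ω)
    (𝔥 : LieSubalgebra ℝ (Module.End ℝ V))
    (h_sp : ∀ h ∈ 𝔥, ∀ x y : V, ω (h x) y + ω x (h y) = 0)
    (circ : V →ₗ[ℝ] V →ₗ[ℝ] ↥𝔥)
    (h_circ_symm : ∀ x y : V, circ x y = circ y x)
    (B : LinearMap.BilinForm ℝ ↥𝔥)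
    (hB_symm : ∀ u v : ↥𝔥, B u v = B v u)
    (hA1 : ∀ (h : ↥𝔥) (x y : V),
      B h (circ x y) = ω ((h : Module.End ℝ V) x) y
        ∧ ω ((h : Module.End ℝ V) x) y = ω ((h : Module.End ℝ V) y) x)
    (hTrace : ∀ u v : ↥𝔥,
      2 * LinearMap.trace ℝ V ((u : Module.End ℝ V) ∘ₗ (v : Module.End ℝ V))
          + killingForm ℝ ↥𝔥 u v
        = -2 * ((Module.finrank ℝ V : ℝ) + 4) * B u v)
    (b : Module.Basis (Fin n ⊕ Fin n) ℝ V)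
    (hb1 : ∀ i j : Fin n, ω (b (Sum.inl i)) (b (Sum.inr j)) = if i = j then 1 else 0)
    (hb2 : ∀ i j : Fin n, ω (b (Sum.inl i)) (b (Sum.inl j)) = 0)
    (hb3 : ∀ i j : Fin n, ω (b (Sum.inr i)) (b (Sum.inr j)) = 0)
    (Rh : ↥𝔥 → V → V → ↥𝔥)
    (hRh : ∀ (h : ↥𝔥) (x y : V), Rh h x y
      = (2 * ω x y) • h + circ x ((h : Module.End ℝ V) y) - circ y ((h : Module.End ℝ V) x)) :
    ∀ h u : ↥𝔥,
      B (∑ i : Fin n, Rh h (b (Sum.inl i)) (b (Sum.inr i))) u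
        = 2 * ((Module.finrank ℝ V : ℝ) + 2) * B h u + killingForm ℝ ↥𝔥 h u / 2 := by
  intro h u
  have hd : (Module.finrank ℝ V : ℝ) = 2 * n := by
    rw [Module.finrank_eq_card_basis b]
    simp [Fintype.card_sum]; ring
  set T : Module.End ℝ V := (h : Module.End ℝ V) ∘ₗ (u : Module.End ℝ V) with hT
  have hskew : ∀ x y : V, ω x y = - ω y x := by
    intro x y; have := hω_alt.neg x y; linarith
  have hrepr1 : ∀ (x : V) (i : Fin n), (b.repr x) (Sum.inl i) = ω x (b (Sum.inr i)) := by
    intro x i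
    conv_rhs => rw [← b.sum_repr x]
    rw [map_sum, LinearMap.sum_apply, Fintype.sum_sum_type]
    have e1 : ∀ j : Fin n,
        (ω ((b.repr x (Sum.inl j)) • b (Sum.inl j))) (b (Sum.inr i))
          = if j = i then b.repr x (Sum.inl j) else 0 := by
      intro j
      rw [map_smul, LinearMap.smul_apply, hb1 j i, smul_eq_mul]
      split <;> simp
    have e2 : ∀ j : Fin n,
        (ω ((b.repr x (Sum.inr j)) • b (Sum.inr j))) (b (Sum.inr i)) = 0 := by
      intro j
      rw [map_smul, LinearMap.smul_apply, hb3 j i, smul_eq_mul, mul_zero]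
    rw [Finset.sum_congr rfl fun j _ => e1 j, Finset.sum_congr rfl fun j _ => e2 j]
    simp [Finset.sum_ite_eq']
  have hrepr2 : ∀ (x : V) (i : Fin n), (b.repr x) (Sum.inr i) = - ω x (b (Sum.inl i)) := by
    intro x i
    conv_rhs => rw [← b.sum_repr x]
    rw [map_sum, LinearMap.sum_apply, Fintype.sum_sum_type]
    have e1 : ∀ j : Fin n,
        (ω ((b.repr x (Sum.inl j)) • b (Sum.inl j))) (b (Sum.inl i)) = 0 := by
      intro j
      rw [map_smul, LinearMap.smul_apply, hb2 j i, smul_eq_mul, mul_zero]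
    have e2 : ∀ j : Fin n,
        (ω ((b.repr x (Sum.inr j)) • b (Sum.inr j))) (b (Sum.inl i))
          = if j = i then -(b.repr x (Sum.inr j)) else 0 := by
      intro j
      have : ω (b (Sum.inr j)) (b (Sum.inl i)) = if j = i then -1 else 0 := by
        rw [hskew, hb1]
        by_cases hji : j = i
        · simp [hji]
        · simp [hji, Ne.symm hji]
      rw [map_smul, LinearMap.smul_apply, this, smul_eq_mul]
      split <;> simp
    rw [Finset.sum_congr rfl fun j _ => e1 j, Finset.sum_congr rfl fun j _ => e2 j]
    simp [Finset.sum_ite_eq']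
  have htr : LinearMap.trace ℝ V T
      = (∑ i : Fin n, ω (T (b (Sum.inl i))) (b (Sum.inr i)))
        - ∑ i : Fin n, ω (T (b (Sum.inr i))) (b (Sum.inl i)) := by
    rw [LinearMap.trace_eq_matrix_trace ℝ b, Matrix.trace]
    simp only [Matrix.diag, LinearMap.toMatrix_apply, Fintype.sum_sum_type, hrepr1, hrepr2]
    rw [Finset.sum_neg_distrib, ← sub_eq_add_neg]
  have hterm1 : ∀ i : Fin n,
      B (circ (b (Sum.inl i)) ((h : Module.End ℝ V) (b (Sum.inr i)))) u
        = - ω (T (b (Sum.inl i))) (b (Sum.inr i)) := by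
    intro i
    rw [← hB_symm, (hA1 u (b (Sum.inl i)) ((h : Module.End ℝ V) (b (Sum.inr i)))).1]
    have := h_sp (h : Module.End ℝ V) h.2 ((u : Module.End ℝ V) (b (Sum.inl i))) (b (Sum.inr i))
    simp only [hT, LinearMap.comp_apply]
    linarith
  have hterm2 : ∀ i : Fin n,
      B (circ (b (Sum.inr i)) ((h : Module.End ℝ V) (b (Sum.inl i)))) u
        = - ω (T (b (Sum.inr i))) (b (Sum.inl i)) := by
    intro i
    rw [← hB_symm, (hA1 u (b (Sum.inr i)) ((h : Module.End ℝ V) (b (Sum.inl i)))).1]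
    have := h_sp (h : Module.End ℝ V) h.2 ((u : Module.End ℝ V) (b (Sum.inr i))) (b (Sum.inl i))
    simp only [hT, LinearMap.comp_apply]
    linarith
  have hLHS : B (∑ i : Fin n, Rh h (b (Sum.inl i)) (b (Sum.inr i))) u
      = 2 * n * B h u - LinearMap.trace ℝ V T := by
    simp only [hRh, hb1, eq_self_iff_true, if_true, mul_one]
    rw [map_sum, LinearMap.sum_apply]
    have key : ∀ i : Fin n,
        B ((2:ℝ) • h + circ (b (Sum.inl i)) ((h : Module.End ℝ V) (b (Sum.inr i)))
            - circ (b (Sum.inr i)) ((h : Module.End ℝ V) (b (Sum.inl i)))) u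
          = 2 * B h u - ω (T (b (Sum.inl i))) (b (Sum.inr i))
            + ω (T (b (Sum.inr i))) (b (Sum.inl i)) := by
      intro i
      rw [map_sub, map_add, map_smul, LinearMap.sub_apply, LinearMap.add_apply,
        LinearMap.smul_apply, smul_eq_mul, hterm1 i, hterm2 i]
      ring
    rw [Finset.sum_congr rfl fun i _ => key i, htr,
      Finset.sum_add_distrib, Finset.sum_sub_distrib, Finset.sum_const]
    simp only [Finset.card_univ, Fintype.card_fin, nsmul_eq_mul]
    ring
  have htrval := hTrace h u
  rw [← hT] at htrval
  rw [hLHS, hd]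
  rw [hd] at htrval
  linarith
end

section
/- Let (V, ω) be a symplectic vector space over ℝ and let (𝔥, ∘, ⟨·,·⟩) be a special symplectic subalgebra of sp(V, ω). For h ∈ 𝔥 define R_h(x,y) := 2ω(x,y)h + x∘(hy) − y∘(hx). Then for all u, x, y, z ∈ V the cyclic identity R_{u∘x}(y,z) + R_{u∘y}(z,x) + R_{u∘z}(x,y) = 0 holds. Moreover, if dim V ≥ 4 and u ∈ V satisfies u∘x = 0 for all x ∈ V, then u = 0. -/
attribute [local instance 100] LieRing.ofAssociativeRing

/-- Let `(V, ω)` be a symplectic vector space over `ℝ` and `(𝔥, ∘, ⟨·,·⟩)` a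
special symplectic subalgebra of `sp(V, ω)`.  With `R_h(x,y) = 2ω(x,y)h + x∘(hy) − y∘(hx)`,
the cyclic identity `R_{u∘x}(y,z) + R_{u∘y}(z,x) + R_{u∘z}(x,y) = 0` holds; moreover if
`dim V ≥ 4` and `u∘x = 0` for all `x`, then `u = 0`. -/
theorem special_symplectic_Rcirc_cyclic
    (V : Type) [AddCommGroup V] [Module ℝ V] [FiniteDimensional ℝ V]
    (ω : LinearMap.BilinForm ℝ V)
    (hω_alt : LinearMap.IsAlt ω) (hω_nd : LinearMap.BilinForm.Nondegenerate ω)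
    (𝔥 : LieSubalgebra ℝ (Module.End ℝ V))
    (h_sp : ∀ h ∈ 𝔥, ∀ x y : V, ω (h x) y + ω x (h y) = 0)
    (circ : V →ₗ[ℝ] V →ₗ[ℝ] ↥𝔥)
    (h_circ_symm : ∀ x y : V, circ x y = circ y x)
    (B : LinearMap.BilinForm ℝ ↥𝔥)
    (hB_symm : ∀ u v : ↥𝔥, B u v = B v u)
    (hB_nd : LinearMap.BilinForm.Nondegenerate B)
    (hE : ∀ (h : ↥𝔥) (x y : V),
      ⁅(h : Module.End ℝ V), (circ x y : Module.End ℝ V)⁆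
        = (circ ((h : Module.End ℝ V) x) y : Module.End ℝ V)
          + (circ x ((h : Module.End ℝ V) y) : Module.End ℝ V))
    (hI : ∀ u h v : ↥𝔥, B ⁅u, h⁆ v + B h ⁅u, v⁆ = 0)
    (hA1 : ∀ (h : ↥𝔥) (x y : V),
      B h (circ x y) = ω ((h : Module.End ℝ V) x) y
        ∧ ω ((h : Module.End ℝ V) x) y = ω ((h : Module.End ℝ V) y) x)
    (hA2 : ∀ x y z : V,
      (circ x y : Module.End ℝ V) z - (circ x z : Module.End ℝ V) y
        = (2 * ω y z) • x - ω x y • z + ω x z • y)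
    (Rh : ↥𝔥 → V → V → ↥𝔥)
    (hRh : ∀ (h : ↥𝔥) (x y : V), Rh h x y
      = (2 * ω x y) • h + circ x ((h : Module.End ℝ V) y) - circ y ((h : Module.End ℝ V) x)) :
    (∀ u x y z : V,
      Rh (circ u x) y z + Rh (circ u y) z x + Rh (circ u z) x y = 0) ∧
    (4 ≤ Module.finrank ℝ V → ∀ u : V, (∀ x : V, circ u x = 0) → u = 0) := by
  have hanti : ∀ a b : V, ω a b = - ω b a := by
    intro a b
    have h := hω_alt.neg b a
    linarith
  constructor
  · intro u x y z
    have e1 : circ y ((circ u x : Module.End ℝ V) z)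
        = circ y ((circ u z : Module.End ℝ V) x)
          + ((2 * ω x z) • circ y u - ω u x • circ y z + ω u z • circ y x) := by
      have h := congrArg (circ y) (hA2 u x z)
      simp only [map_add, map_sub, map_smul] at h
      have := sub_eq_iff_eq_add'.mp h
      rw [this]
    have e2 : circ z ((circ u y : Module.End ℝ V) x)
        = circ z ((circ u x : Module.End ℝ V) y)
          + ((2 * ω y x) • circ z u - ω u y • circ z x + ω u x • circ z y) := by
      have h := congrArg (circ z) (hA2 u y x)
      simp only [map_add, map_sub, map_smul] at h
      have := sub_eq_iff_eq_add'.mp h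
      rw [this]
    have e3 : circ x ((circ u z : Module.End ℝ V) y)
        = circ x ((circ u y : Module.End ℝ V) z)
          + ((2 * ω z y) • circ x u - ω u z • circ x y + ω u y • circ x z) := by
      have h := congrArg (circ x) (hA2 u z y)
      simp only [map_add, map_sub, map_smul] at h
      have := sub_eq_iff_eq_add'.mp h
      rw [this]
    rw [hRh, hRh, hRh, e1, e2, e3, h_circ_symm y u, h_circ_symm z u, h_circ_symm x u,
      h_circ_symm z y, h_circ_symm z x, h_circ_symm y x,
      hanti x z, hanti y x, hanti z y]
    module
  · intro hdim u hu
    by_contra hne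
    have key : ∀ y z : V, (0 : V) = (2 * ω y z) • u - ω u y • z + ω u z • y := by
      intro y z
      have h2 := hA2 u y z
      rw [hu y, hu z] at h2
      simpa using h2
    obtain ⟨z₀, hz₀⟩ : ∃ z, ω u z ≠ 0 := by
      by_contra hc
      push_neg at hc
      exact hne (hω_nd.1 u hc)
    have hK : LinearMap.ker (ω u) ≤ Submodule.span ℝ {u} := by
      intro y hy
      have hy0 : ω u y = 0 := hy
      have h := key y z₀
      rw [hy0] at h
      have h' : ω u z₀ • y = -((2 * ω y z₀) • u) := by
        have : (2 * ω y z₀) • u + ω u z₀ • y = 0 := by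
          rw [show (0:V) = (2 * ω y z₀) • u - (0:ℝ) • z₀ + ω u z₀ • y from h]; module
        linear_combination (norm := module) this
      have hy' : y = ((ω u z₀)⁻¹ * (-(2 * ω y z₀))) • u := by
        rw [mul_smul, neg_smul, ← h', inv_smul_smul₀ hz₀]
      exact Submodule.mem_span_singleton.2 ⟨_, hy'.symm⟩
    have h1 : Module.finrank ℝ (LinearMap.ker (ω u)) ≤ 1 := by
      calc Module.finrank ℝ (LinearMap.ker (ω u))
          ≤ Module.finrank ℝ (Submodule.span ℝ {u}) := Submodule.finrank_mono hK
        _ = 1 := finrank_span_singleton hne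
    have h2 : Module.finrank ℝ (LinearMap.range (ω u))
        + Module.finrank ℝ (LinearMap.ker (ω u)) = Module.finrank ℝ V :=
      LinearMap.finrank_range_add_finrank_ker (ω u)
    have h3 : Module.finrank ℝ (LinearMap.range (ω u)) ≤ 1 := by
      simpa using Submodule.finrank_le (LinearMap.range (ω u))
    omega
end
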